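/- If K ⊆ F_2^n is a linear subspace with L_q + K = F_2^n and L_q ∩ K = {0}, then Γ(F_2^n, z) = Γ(L_q, z) · Γ(K, z) for every z ∈ F_2^n. -/

import Mathlib

open Finset

/-- The quadratic form q : F_2^n → Z_4. -/
def quadForm {n : ℕ} (A : Fin n → Fin n → ZMod 2) (b : Fin n → ZMod 2)
    (x : Fin n → ZMod 2) : ZMod 4 :=
  2 * ∑ p ∈ Finset.univ.filter (fun p : Fin n × Fin n => p.1 < p.2),
      ((A p.1 p.2).val : ZMod 4) * ((x p.1).val : ZMod 4) * ((x p.2).val : ZMod 4)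
  + ∑ α : Fin n, ((b α).val : ZMod 4) * ((x α).val : ZMod 4)

/-- The set L_q. -/
def Lset {n : ℕ} (A : Fin n → Fin n → ZMod 2) (b : Fin n → ZMod 2) :
    Set (Fin n → ZMod 2) :=
  {x | ∀ y, quadForm A b (x + y) = quadForm A b x + quadForm A b y}

/-- F_2 inner product. -/
def ip {n : ℕ} (z x : Fin n → ZMod 2) : ZMod 2 := ∑ α, z α * x α

/-- The partial Fourier transform Γ(L, z). -/
noncomputable def Gamma {n : ℕ} (A : Fin n → Fin n → ZMod 2) (b : Fin n → ZMod 2)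
    (L : Set (Fin n → ZMod 2)) (z : Fin n → ZMod 2) : ℂ :=
  ∑ x ∈ (Set.toFinite L).toFinset,
    (-1 : ℂ) ^ (ip z x).val * Complex.I ^ (quadForm A b x).val

/-!
Write `f(v) = (-1)^{zᵀv} i^{q(v)}` for the summand of `Γ`. By definition of `L_q`, `f(x + y) = f(x) f(y)`
whenever `x ∈ L_q`. Over `F_2` the set `L_q` is a subspace, so the hypotheses say that `L_q` and `K` are
complementary and `(x, y) ↦ x + y` is a bijection `L_q × K → F_2^n`. Reindexing the sum over `F_2^n` along
this bijection gives `Σ_{x, y} f(x) f(y) = Γ(L_q, z) Γ(K, z)`.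
-/

lemma pow_zmod_val_add {M : Type*} [Monoid M] {k : ℕ} [NeZero k] {u : M} (hu : u ^ k = 1)
    (a c : ZMod k) : u ^ (a + c).val = u ^ a.val * u ^ c.val := by
  rw [ZMod.val_add, ← pow_eq_pow_mod _ hu, pow_add]

lemma ip_add {n : ℕ} (z x y : Fin n → ZMod 2) : ip z (x + y) = ip z x + ip z y := by
  simp only [ip, Pi.add_apply, mul_add, sum_add_distrib]

section Lsubmodule

variable {n : ℕ} (A : Fin n → Fin n → ZMod 2) (b : Fin n → ZMod 2)

lemma quadForm_zero : quadForm A b 0 = 0 := by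
  simp [quadForm]

def Lsubmodule : Submodule (ZMod 2) (Fin n → ZMod 2) :=
  AddSubgroup.toZModSubmodule 2
    { carrier := Lset A b
      zero_mem' := fun y => by rw [zero_add, quadForm_zero, zero_add]
      add_mem' := fun {x x'} hx hx' y => by rw [add_assoc, hx, hx', hx, add_assoc]
      neg_mem' := fun {x} hx => by
        rwa [show -x = x from funext fun i => ZMod.neg_eq_self_mod_two _] }

@[simp]
lemma coe_Lsubmodule : (Lsubmodule A b : Set (Fin n → ZMod 2)) = Lset A b := rfl

end Lsubmodule

noncomputable def gammaTerm {n : ℕ} (A : Fin n → Fin n → ZMod 2) (b : Fin n → ZMod 2)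
    (z x : Fin n → ZMod 2) : ℂ :=
  (-1 : ℂ) ^ (ip z x).val * Complex.I ^ (quadForm A b x).val

lemma gammaTerm_add_of_mem_Lset {n : ℕ} {A : Fin n → Fin n → ZMod 2} {b : Fin n → ZMod 2}
    {x : Fin n → ZMod 2} (hx : x ∈ Lset A b) (z y : Fin n → ZMod 2) :
    gammaTerm A b z (x + y) = gammaTerm A b z x * gammaTerm A b z y := by
  simp only [gammaTerm]
  rw [hx y, ip_add, pow_zmod_val_add (by norm_num), pow_zmod_val_add Complex.I_pow_four]
  ring

lemma Gamma_eq_sum_subtype {n : ℕ} (A : Fin n → Fin n → ZMod 2) (b : Fin n → ZMod 2)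
    (S : Set (Fin n → ZMod 2)) [Fintype S] (z : Fin n → ZMod 2) :
    Gamma A b S z = ∑ x : S, gammaTerm A b z x := by
  rw [Gamma, Set.Finite.toFinset_eq_toFinset, ← Finset.sum_set_coe]
  rfl

theorem Gamma_factorizes_general (n : ℕ)
    (A : Fin n → Fin n → ZMod 2) (b : Fin n → ZMod 2)
    (K : Submodule (ZMod 2) (Fin n → ZMod 2))
    (hsum : ∀ v : Fin n → ZMod 2, ∃ x ∈ Lset A b, ∃ y ∈ K, v = x + y)
    (hint : Lset A b ∩ (K : Set (Fin n → ZMod 2)) = {0})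
    (z : Fin n → ZMod 2) :
    Gamma A b Set.univ z = Gamma A b (Lset A b) z * Gamma A b (K : Set (Fin n → ZMod 2)) z := by
  classical
  have hcompl : IsCompl (Lsubmodule A b) K := by
    refine ⟨?_, Submodule.codisjoint_iff_exists_add_eq.mpr fun v => ?_⟩
    · rw [disjoint_iff, ← SetLike.coe_set_eq, Submodule.coe_inf, coe_Lsubmodule, hint]
      rfl
    · obtain ⟨x, hx, y, hy, rfl⟩ := hsum v
      exact ⟨x, y, hx, hy, rfl⟩
  rw [← coe_Lsubmodule A b, Gamma_eq_sum_subtype, Gamma_eq_sum_subtype, Gamma_eq_sum_subtype,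
    Fintype.sum_mul_sum, ← Fintype.sum_prod_type']
  let e : (Lsubmodule A b × K) ≃ (Set.univ : Set (Fin n → ZMod 2)) :=
    (Submodule.prodEquivOfIsCompl _ _ hcompl).toEquiv.trans (Equiv.Set.univ _).symm
  rw [← e.sum_comp]
  exact Fintype.sum_congr _ _ fun p => gammaTerm_add_of_mem_Lset p.1.2 z p.2

/-- If K is a linear subspace with L_q + K = F_2^n and
L_q ∩ K = {0}, then Γ(F_2^n, z) = Γ(L_q, z) · Γ(K, z) for every z. -/
theorem Gamma_factorizes (n : ℕ) (hn : 1 ≤ n)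
    (A : Fin n → Fin n → ZMod 2) (b : Fin n → ZMod 2)
    (K : Submodule (ZMod 2) (Fin n → ZMod 2))
    (hsum : ∀ v : Fin n → ZMod 2, ∃ x ∈ Lset A b, ∃ y ∈ K, v = x + y)
    (hint : Lset A b ∩ (K : Set (Fin n → ZMod 2)) = {0})
    (z : Fin n → ZMod 2) :
    Gamma A b Set.univ z = Gamma A b (Lset A b) z * Gamma A b (K : Set (Fin n → ZMod 2)) z :=
  Gamma_factorizes_general n A b K hsum hint z
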